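/- Two triple ratios and two quadruple ratios form a complete invariant for quadruples of flags: if ((v₀,η₀),…,(v₃,η₃)) and ((v₀′,η₀′),…,(v₃′,η₃′)) are ordered quadruples of flags in general position with t₀₁₂ = t₀₁₂′, t₀₂₃ = t₀₂₃′, e₀₂ = e₀₂′ and e₂₀ = e₂₀′ (where t₀₁₂ = 𝕋(F₀,F₁,F₂), t₀₂₃ = 𝕋(F₀,F₂,F₃), and e₀₂, e₂₀ are the quadruple ratios), then there exists T ∈ SL(3,ℝ) such that for each i, T v_i is a nonzero scalar multiple of v_i′ and η_i ∘ T⁻¹ is a nonzero scalar multiple of η_i′. -/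

import Mathlib

/-- The triple ratio of three flags `(vᵢ, ηᵢ)` of `ℝP²`. -/
noncomputable def tripleRatio (v₀ v₁ v₂ : Fin 3 → ℝ)
    (η₀ η₁ η₂ : (Fin 3 → ℝ) →ₗ[ℝ] ℝ) : ℝ :=
  (η₀ v₁ * η₁ v₂ * η₂ v₀) / (η₀ v₂ * η₁ v₀ * η₂ v₁)

/-- An ordered quadruple of flags `(v i, η i)` of `ℝP²` in general position. -/
def IsGenPosQuad (v : Fin 4 → Fin 3 → ℝ) (η : Fin 4 → (Fin 3 → ℝ) →ₗ[ℝ] ℝ) : Prop :=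
  (∀ i, v i ≠ 0) ∧ (∀ i, η i ≠ 0) ∧ (∀ i, η i (v i) = 0) ∧
  (∀ i j k : Fin 4, i ≠ j → i ≠ k → j ≠ k → LinearIndependent ℝ ![v i, v j, v k]) ∧
  (∀ i j k : Fin 4, i ≠ j → i ≠ k → j ≠ k → LinearIndependent ℝ ![η i, η j, η k]) ∧
  (∀ i j, i ≠ j → η i (v j) ≠ 0)

/-!
Rescaling the vectors changes none of the ratios, so both quadruples may be normalised to
`v 3 = v 0 + v 1 + v 2`, and then the linear map sending one normalised frame to the other
reduces the problem to two families of functionals `η, ζ` on the same four points. There each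
flag functional is determined up to scale by one ratio of its values: `e₀₂` pins down `η 0` and
`e₂₀` pins down `η 2`; once these are known, `t₀₁₂` pins down `η 1` and `t₀₂₃` pins down `η 3`.
Finally, since `3` is odd, the linear map can be rescaled to have determinant one.
-/

open Module

section LinearAlgebra

variable {K V : Type*} [Field K] [AddCommGroup V] [Module K V]

theorem LinearIndependent.ne_smul_add_smul {x y z : V} (h : LinearIndependent K ![x, y, z])
    (b c : K) : x ≠ b • y + c • z := by
  intro hx
  refine (linearIndependent_finCons.mp h).2 ?_
  rw [hx]
  exact add_mem (Submodule.smul_mem _ _ (Submodule.subset_span ⟨0, rfl⟩))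
    (Submodule.smul_mem _ _ (Submodule.subset_span ⟨1, rfl⟩))

theorem exists_basis_coe_eq (hV : finrank K V = 3) {x y z : V}
    (h : LinearIndependent K ![x, y, z]) : ∃ B : Basis (Fin 3) K V, ⇑B = ![x, y, z] :=
  ⟨_, coe_basisOfLinearIndependentOfCardEqFinrank h (by simp [hV])⟩

theorem exists_smul_eq_sum_of_linearIndependent (hV : finrank K V = 3) {v : Fin 4 → V}
    (hv : ∀ i j k, i ≠ j → i ≠ k → j ≠ k → LinearIndependent K ![v i, v j, v k]) :
    ∃ b : Fin 4 → K, (∀ i, b i ≠ 0) ∧ b 3 • v 3 = b 0 • v 0 + b 1 • v 1 + b 2 • v 2 := by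
  obtain ⟨B, hB⟩ := exists_basis_coe_eq hV (hv 0 1 2 (by decide) (by decide) (by decide))
  set a := B.repr (v 3)
  have hv3 : v 3 = a 0 • v 0 + a 1 • v 1 + a 2 • v 2 := by
    conv_lhs => rw [← B.sum_repr (v 3)]
    simp [hB, Fin.sum_univ_three, a]
  have ha0 : a 0 ≠ 0 := fun h0 => (hv 3 1 2 (by decide) (by decide) (by decide)).ne_smul_add_smul
    (a 1) (a 2) (by simp [hv3, h0])
  have ha1 : a 1 ≠ 0 := fun h1 => (hv 3 0 2 (by decide) (by decide) (by decide)).ne_smul_add_smul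
    (a 0) (a 2) (by simp [hv3, h1])
  have ha2 : a 2 ≠ 0 := fun h2 => (hv 3 0 1 (by decide) (by decide) (by decide)).ne_smul_add_smul
    (a 0) (a 1) (by simp [hv3, h2])
  refine ⟨![a 0, a 1, a 2, 1], fun i => ?_, by simpa using hv3⟩
  fin_cases i <;> simp [ha0, ha1, ha2]

theorem exists_linearEquiv_apply_eq_of_eq_add (hV : finrank K V = 3) {u u' : Fin 4 → V}
    (hu : LinearIndependent K ![u 0, u 1, u 2]) (hu' : LinearIndependent K ![u' 0, u' 1, u' 2])
    (hu3 : u 3 = u 0 + u 1 + u 2) (hu3' : u' 3 = u' 0 + u' 1 + u' 2) :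
    ∃ f : V ≃ₗ[K] V, ∀ i, f (u i) = u' i := by
  obtain ⟨B, hB⟩ := exists_basis_coe_eq hV hu
  obtain ⟨B', hB'⟩ := exists_basis_coe_eq hV hu'
  have hf (k : Fin 3) : B.equiv B' (Equiv.refl _) (B k) = B' k := B.equiv_apply k B' _
  simp only [hB, hB'] at hf
  refine ⟨B.equiv B' (Equiv.refl _), fun i => ?_⟩
  fin_cases i
  · exact hf 0
  · exact hf 1
  · exact hf 2
  · simpa [hu3, hu3'] using congr($(hf 0) + $(hf 1) + $(hf 2))

namespace Module.Dual

theorem apply_ne_zero_of_linearIndependent (hV : finrank K V = 3) {ℓ : Dual K V} (hℓ : ℓ ≠ 0)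
    {x y z : V} (h : LinearIndependent K ![x, y, z]) (hx : ℓ x = 0) (hy : ℓ y = 0) :
    ℓ z ≠ 0 := by
  intro hz
  apply hℓ
  obtain ⟨B, hB⟩ := exists_basis_coe_eq hV h
  refine B.ext fun i => ?_
  fin_cases i <;> simp [hB, hx, hy, hz]

theorem eq_div_smul_of_mul_eq (hV : finrank K V = 3) {α β : Dual K V} {x y z : V}
    (h : LinearIndependent K ![x, y, z]) (hαx : α x = 0) (hβx : β x = 0) (hβy : β y ≠ 0)
    (hyz : α z * β y = α y * β z) : α = (α y / β y) • β := by
  obtain ⟨B, hB⟩ := exists_basis_coe_eq hV h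
  refine B.ext fun i => ?_
  fin_cases i
  · simp [hB, hαx, hβx]
  · simp [hB, hβy]
  · simp only [Fin.reduceFinMk, hB, Fin.isValue, Matrix.cons_val, LinearMap.smul_apply, smul_eq_mul]
    field_simp
    linear_combination hyz

end Module.Dual

end LinearAlgebra

theorem Real.exists_pow_eq_of_odd {n : ℕ} (hn : Odd n) (x : ℝ) : ∃ s : ℝ, s ^ n = x := by
  have hn0 : n ≠ 0 := hn.pos.ne'
  rcases le_total 0 x with hx | hx
  · exact ⟨x ^ (n⁻¹ : ℝ), Real.rpow_inv_natCast_pow hx hn0⟩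
  · refine ⟨-(-x) ^ (n⁻¹ : ℝ), ?_⟩
    rw [hn.neg_pow, Real.rpow_inv_natCast_pow (by linarith) hn0, neg_neg]

theorem exists_specialLinearGroup_of_linearEquiv {ι : Type*} {n : ℕ} (hn : Odd n)
    (f : (Fin n → ℝ) ≃ₗ[ℝ] (Fin n → ℝ)) {v v' : ι → Fin n → ℝ}
    {η η' : ι → Dual ℝ (Fin n → ℝ)} (hv : ∀ i, ∃ c : ℝ, c ≠ 0 ∧ f (v i) = c • v' i)
    (hη : ∀ i, ∃ d : ℝ, d ≠ 0 ∧ η i = d • (η' i ∘ₗ f)) :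
    ∃ T : Matrix.SpecialLinearGroup (Fin n) ℝ, ∀ i,
      (∃ c : ℝ, c ≠ 0 ∧ T.1.mulVec (v i) = c • v' i) ∧
      (∃ d : ℝ, d ≠ 0 ∧ (η i).comp (T⁻¹).1.mulVecLin = d • η' i) := by
  set M := LinearMap.toMatrix' (f : (Fin n → ℝ) →ₗ[ℝ] (Fin n → ℝ))
  have hM : M.det ≠ 0 := by
    rw [LinearMap.det_toMatrix']
    exact f.isUnit_det'.ne_zero
  obtain ⟨s, hs⟩ := Real.exists_pow_eq_of_odd hn M.det⁻¹
  have hs0 : s ≠ 0 := by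
    rintro rfl
    exact hM (inv_eq_zero.mp (by rw [← hs, zero_pow hn.pos.ne']))
  let T : Matrix.SpecialLinearGroup (Fin n) ℝ :=
    ⟨s • M, by rw [Matrix.det_smul, Fintype.card_fin, hs, inv_mul_cancel₀ hM]⟩
  have hT : ∀ x, T.1.mulVec x = s • f x := fun x => by
    simp [T, M, Matrix.smul_mulVec, LinearMap.toMatrix'_mulVec]
  have hTinv : ∀ x, f ((T⁻¹).1.mulVec x) = s⁻¹ • x := fun x => by
    rw [eq_inv_smul_iff₀ hs0, ← hT, Matrix.mulVec_mulVec, ← Matrix.SpecialLinearGroup.coe_mul,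
      mul_inv_cancel, Matrix.SpecialLinearGroup.coe_one, Matrix.one_mulVec]
  refine ⟨T, fun i => ⟨?_, ?_⟩⟩
  · obtain ⟨c, hc, hfc⟩ := hv i
    exact ⟨s * c, mul_ne_zero hs0 hc, by rw [hT, hfc, smul_smul]⟩
  · obtain ⟨d, hd, hdη⟩ := hη i
    refine ⟨d * s⁻¹, mul_ne_zero hd (inv_ne_zero hs0), LinearMap.ext fun x => ?_⟩
    rw [LinearMap.comp_apply, Matrix.mulVecLin_apply, hdη, LinearMap.smul_apply,
      LinearMap.comp_apply, LinearEquiv.coe_coe, hTinv, map_smul]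
    simp only [smul_eq_mul, LinearMap.smul_apply, mul_assoc]

theorem tripleRatio_smul_vectors {a b c : ℝ} (ha : a ≠ 0) (hb : b ≠ 0) (hc : c ≠ 0)
    (v₀ v₁ v₂ : Fin 3 → ℝ) (η₀ η₁ η₂ : Dual ℝ (Fin 3 → ℝ)) :
    tripleRatio (a • v₀) (b • v₁) (c • v₂) η₀ η₁ η₂ = tripleRatio v₀ v₁ v₂ η₀ η₁ η₂ := by
  simp only [tripleRatio, map_smul, smul_eq_mul]
  calc _ = (a * b * c * (η₀ v₁ * η₁ v₂ * η₂ v₀)) / (a * b * c * (η₀ v₂ * η₁ v₀ * η₂ v₁)) := by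
        congr 1 <;> ring
    _ = _ := mul_div_mul_left _ _ (mul_ne_zero (mul_ne_zero ha hb) hc)

theorem tripleRatio_smul_covectors {a b c : ℝ} (ha : a ≠ 0) (hb : b ≠ 0) (hc : c ≠ 0)
    (v₀ v₁ v₂ : Fin 3 → ℝ) (η₀ η₁ η₂ : Dual ℝ (Fin 3 → ℝ)) :
    tripleRatio v₀ v₁ v₂ (a • η₀) (b • η₁) (c • η₂) = tripleRatio v₀ v₁ v₂ η₀ η₁ η₂ := by
  simp only [tripleRatio, LinearMap.smul_apply, smul_eq_mul]
  calc _ = (a * b * c * (η₀ v₁ * η₁ v₂ * η₂ v₀)) / (a * b * c * (η₀ v₂ * η₁ v₀ * η₂ v₁)) := by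
        congr 1 <;> ring
    _ = _ := mul_div_mul_left _ _ (mul_ne_zero (mul_ne_zero ha hb) hc)

theorem tripleRatio_rotate (v₀ v₁ v₂ : Fin 3 → ℝ) (η₀ η₁ η₂ : Dual ℝ (Fin 3 → ℝ)) :
    tripleRatio v₁ v₂ v₀ η₁ η₂ η₀ = tripleRatio v₀ v₁ v₂ η₀ η₁ η₂ := by
  simp only [tripleRatio]
  ring

theorem tripleRatio_swap (v₀ v₁ v₂ : Fin 3 → ℝ) (η₀ η₁ η₂ : Dual ℝ (Fin 3 → ℝ)) :
    tripleRatio v₀ v₂ v₁ η₀ η₂ η₁ = (tripleRatio v₀ v₁ v₂ η₀ η₁ η₂)⁻¹ := by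
  simp only [tripleRatio, inv_div]
  ring

theorem tripleRatio_comp (f : (Fin 3 → ℝ) →ₗ[ℝ] (Fin 3 → ℝ)) (v₀ v₁ v₂ : Fin 3 → ℝ)
    (η₀ η₁ η₂ : Dual ℝ (Fin 3 → ℝ)) :
    tripleRatio v₀ v₁ v₂ (η₀ ∘ₗ f) (η₁ ∘ₗ f) (η₂ ∘ₗ f) =
      tripleRatio (f v₀) (f v₁) (f v₂) η₀ η₁ η₂ :=
  rfl

theorem tripleRatio_eq_neg_div {a b c x : Fin 3 → ℝ} (hx : x = a + b + c)
    {α β γ : Dual ℝ (Fin 3 → ℝ)} (hβb : β b = 0) (hβc : β c = 0) (hγc : γ c = 0) (hγx : γ x = 0)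
    (hβa : β a ≠ 0) (hγa : γ a ≠ 0) :
    tripleRatio a b x α β γ = -α b / α x := by
  have hβx : β x = β a := by simp [hx, hβb, hβc]
  have hγb : γ b = -γ a := by
    simp only [hx, map_add, hγc] at hγx
    linear_combination hγx
  rw [tripleRatio, hβx, hγb]
  field_simp

theorem mul_eq_mul_of_tripleRatio_eq {v₀ v₁ v₂ : Fin 3 → ℝ} {η₀ η₀' η₁ η₂ : Dual ℝ (Fin 3 → ℝ)}
    (h : tripleRatio v₀ v₁ v₂ η₀ η₁ η₂ = tripleRatio v₀ v₁ v₂ η₀' η₁ η₂)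
    (h₀ : η₀ v₂ ≠ 0) (h₀' : η₀' v₂ ≠ 0) (h₁₀ : η₁ v₀ ≠ 0) (h₁₂ : η₁ v₂ ≠ 0)
    (h₂₀ : η₂ v₀ ≠ 0) (h₂₁ : η₂ v₁ ≠ 0) :
    η₀ v₁ * η₀' v₂ = η₀ v₂ * η₀' v₁ := by
  rw [tripleRatio, tripleRatio, div_eq_div_iff (by simp [*]) (by simp [*])] at h
  apply mul_left_cancel₀ (mul_ne_zero (mul_ne_zero h₁₂ h₂₀) (mul_ne_zero h₁₀ h₂₁))
  linear_combination h

/-- `L i j` is an equation of the line through the points `v i` and `v j` of `ℝP²`. -/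
def IsLineFamily (L : Fin 4 → Fin 4 → Dual ℝ (Fin 3 → ℝ)) (v : Fin 4 → Fin 3 → ℝ) : Prop :=
  ∀ i j, i ≠ j → L i j ≠ 0 ∧ L i j (v i) = 0 ∧ L i j (v j) = 0

theorem IsLineFamily.smul {L : Fin 4 → Fin 4 → Dual ℝ (Fin 3 → ℝ)} {v : Fin 4 → Fin 3 → ℝ}
    (hL : IsLineFamily L v) (b : Fin 4 → ℝ) : IsLineFamily L (fun i => b i • v i) :=
  fun i j hij => by
    obtain ⟨hne, hi, hj⟩ := hL i j hij
    exact ⟨hne, by simp [hi], by simp [hj]⟩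

theorem IsLineFamily.comp {L : Fin 4 → Fin 4 → Dual ℝ (Fin 3 → ℝ)} {v u : Fin 4 → Fin 3 → ℝ}
    (hL : IsLineFamily L v) (f : (Fin 3 → ℝ) ≃ₗ[ℝ] (Fin 3 → ℝ)) (hf : ∀ i, f (u i) = v i) :
    IsLineFamily (fun i j => L i j ∘ₗ f) u :=
  fun i j hij => by
    obtain ⟨hne, hi, hj⟩ := hL i j hij
    refine ⟨fun h0 => hne (LinearMap.ext fun x => ?_), by simpa [hf] using hi,
      by simpa [hf] using hj⟩
    simpa using LinearMap.congr_fun h0 (f.symm x)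

theorem IsGenPosQuad.smul {v : Fin 4 → Fin 3 → ℝ} {η : Fin 4 → Dual ℝ (Fin 3 → ℝ)}
    (h : IsGenPosQuad v η) {b : Fin 4 → ℝ} (hb : ∀ i, b i ≠ 0) :
    IsGenPosQuad (fun i => b i • v i) η := by
  obtain ⟨hv, hη, hηv, hvli, hηli, hηv'⟩ := h
  refine ⟨fun i => smul_ne_zero (hb i) (hv i), hη, fun i => by simp [hηv i],
    fun i j k hij hik hjk => ?_, hηli, fun i j hij => by simpa [hb j] using hηv' i j hij⟩
  convert (hvli i j k hij hik hjk).units_smul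
    (fun m => Units.mk0 (![b i, b j, b k] m) (by fin_cases m <;> simp [hb])) using 1
  ext m : 1
  fin_cases m <;> rfl

theorem quadRatio₀₂_eq {u : Fin 4 → Fin 3 → ℝ}
    (hu : ∀ i j k, i ≠ j → i ≠ k → j ≠ k → LinearIndependent ℝ ![u i, u j, u k])
    (hu3 : u 3 = u 0 + u 1 + u 2) {L : Fin 4 → Fin 4 → Dual ℝ (Fin 3 → ℝ)}
    (hL : IsLineFamily L u) (η₀ : Dual ℝ (Fin 3 → ℝ)) :
    tripleRatio (u 0) (u 3) (u 1) η₀ (L 2 3) (L 1 2) = (-η₀ (u 1) / η₀ (u 3))⁻¹ := by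
  obtain ⟨h₂₃, h₂₃₂, h₂₃₃⟩ := hL 2 3 (by decide)
  obtain ⟨h₁₂, h₁₂₁, h₁₂₂⟩ := hL 1 2 (by decide)
  rw [tripleRatio_swap, tripleRatio_eq_neg_div hu3 h₁₂₁ h₁₂₂ h₂₃₂ h₂₃₃
    (Dual.apply_ne_zero_of_linearIndependent (by simp) h₁₂
      (hu 1 2 0 (by decide) (by decide) (by decide)) h₁₂₁ h₁₂₂)
    (Dual.apply_ne_zero_of_linearIndependent (by simp) h₂₃
      (hu 2 3 0 (by decide) (by decide) (by decide)) h₂₃₂ h₂₃₃)]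

theorem quadRatio₂₀_eq {u : Fin 4 → Fin 3 → ℝ}
    (hu : ∀ i j k, i ≠ j → i ≠ k → j ≠ k → LinearIndependent ℝ ![u i, u j, u k])
    (hu3 : u 3 = u 0 + u 1 + u 2) {L : Fin 4 → Fin 4 → Dual ℝ (Fin 3 → ℝ)}
    (hL : IsLineFamily L u) (η₂ : Dual ℝ (Fin 3 → ℝ)) :
    tripleRatio (u 2) (u 1) (u 3) η₂ (L 0 1) (L 0 3) = -η₂ (u 1) / η₂ (u 3) := by
  obtain ⟨h₀₁, h₀₁₀, h₀₁₁⟩ := hL 0 1 (by decide)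
  obtain ⟨h₀₃, h₀₃₀, h₀₃₃⟩ := hL 0 3 (by decide)
  exact tripleRatio_eq_neg_div (by rw [hu3]; abel) h₀₁₁ h₀₁₀ h₀₃₀ h₀₃₃
    (Dual.apply_ne_zero_of_linearIndependent (by simp) h₀₁
      (hu 0 1 2 (by decide) (by decide) (by decide)) h₀₁₀ h₀₁₁)
    (Dual.apply_ne_zero_of_linearIndependent (by simp) h₀₃
      (hu 0 3 2 (by decide) (by decide) (by decide)) h₀₃₀ h₀₃₃)

theorem eq_smul_of_ratios_eq {u : Fin 4 → Fin 3 → ℝ}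
    (hu : ∀ i j k, i ≠ j → i ≠ k → j ≠ k → LinearIndependent ℝ ![u i, u j, u k])
    (hu3 : u 3 = u 0 + u 1 + u 2) {η ζ : Fin 4 → Dual ℝ (Fin 3 → ℝ)}
    (hη₀ : ∀ i, η i (u i) = 0) (hη : ∀ i j, i ≠ j → η i (u j) ≠ 0)
    (hζ₀ : ∀ i, ζ i (u i) = 0) (hζ : ∀ i j, i ≠ j → ζ i (u j) ≠ 0)
    {L M : Fin 4 → Fin 4 → Dual ℝ (Fin 3 → ℝ)} (hL : IsLineFamily L u) (hM : IsLineFamily M u)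
    (ht012 : tripleRatio (u 0) (u 1) (u 2) (η 0) (η 1) (η 2) =
      tripleRatio (u 0) (u 1) (u 2) (ζ 0) (ζ 1) (ζ 2))
    (ht023 : tripleRatio (u 0) (u 2) (u 3) (η 0) (η 2) (η 3) =
      tripleRatio (u 0) (u 2) (u 3) (ζ 0) (ζ 2) (ζ 3))
    (he02 : tripleRatio (u 0) (u 3) (u 1) (η 0) (L 2 3) (L 1 2) =
      tripleRatio (u 0) (u 3) (u 1) (ζ 0) (M 2 3) (M 1 2))
    (he20 : tripleRatio (u 2) (u 1) (u 3) (η 2) (L 0 1) (L 0 3) =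
      tripleRatio (u 2) (u 1) (u 3) (ζ 2) (M 0 1) (M 0 3)) :
    ∀ i, ∃ d : ℝ, d ≠ 0 ∧ η i = d • ζ i := by
  have hV : finrank ℝ (Fin 3 → ℝ) = 3 := by simp
  have h₀ : η 0 = (η 0 (u 1) / ζ 0 (u 1)) • ζ 0 := by
    rw [quadRatio₀₂_eq hu hu3 hL, quadRatio₀₂_eq hu hu3 hM, inv_inj, neg_div, neg_div, neg_inj,
      div_eq_div_iff (hη 0 3 (by decide)) (hζ 0 3 (by decide))] at he02
    exact Dual.eq_div_smul_of_mul_eq hV (hu 0 1 3 (by decide) (by decide) (by decide)) (hη₀ 0)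
      (hζ₀ 0) (hζ 0 1 (by decide)) (by linear_combination -he02)
  have h₂ : η 2 = (η 2 (u 1) / ζ 2 (u 1)) • ζ 2 := by
    rw [quadRatio₂₀_eq hu hu3 hL, quadRatio₂₀_eq hu hu3 hM, neg_div, neg_div, neg_inj,
      div_eq_div_iff (hη 2 3 (by decide)) (hζ 2 3 (by decide))] at he20
    exact Dual.eq_div_smul_of_mul_eq hV (hu 2 1 3 (by decide) (by decide) (by decide)) (hη₀ 2)
      (hζ₀ 2) (hζ 2 1 (by decide)) (by linear_combination -he20)
  have hc₀ := div_ne_zero (hη 0 1 (by decide)) (hζ 0 1 (by decide))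
  have hc₂ := div_ne_zero (hη 2 1 (by decide)) (hζ 2 1 (by decide))
  rw [h₀, h₂, ← one_smul ℝ (η 1), tripleRatio_smul_covectors hc₀ one_ne_zero hc₂] at ht012
  rw [h₀, h₂, ← one_smul ℝ (η 3), tripleRatio_smul_covectors hc₀ hc₂ one_ne_zero] at ht023
  have h₁ : η 1 = (η 1 (u 0) / ζ 1 (u 0)) • ζ 1 :=
    Dual.eq_div_smul_of_mul_eq hV (hu 1 0 2 (by decide) (by decide) (by decide)) (hη₀ 1) (hζ₀ 1)
      (hζ 1 0 (by decide)) <| mul_eq_mul_of_tripleRatio_eq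
        ((tripleRatio_rotate ..).trans (ht012.trans (tripleRatio_rotate ..).symm))
        (hη 1 0 (by decide)) (hζ 1 0 (by decide)) (hζ 2 1 (by decide)) (hζ 2 0 (by decide))
        (hζ 0 1 (by decide)) (hζ 0 2 (by decide))
  have h₃ : η 3 = (η 3 (u 2) / ζ 3 (u 2)) • ζ 3 :=
    Dual.eq_div_smul_of_mul_eq hV (hu 3 2 0 (by decide) (by decide) (by decide)) (hη₀ 3) (hζ₀ 3)
      (hζ 3 2 (by decide)) <| mul_eq_mul_of_tripleRatio_eq
        ((tripleRatio_rotate ..).symm.trans (ht023.trans (tripleRatio_rotate ..)))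
        (hη 3 2 (by decide)) (hζ 3 2 (by decide)) (hζ 0 3 (by decide)) (hζ 0 2 (by decide))
        (hζ 2 3 (by decide)) (hζ 2 0 (by decide))
  intro i
  fin_cases i
  · exact ⟨_, hc₀, h₀⟩
  · exact ⟨_, div_ne_zero (hη 1 0 (by decide)) (hζ 1 0 (by decide)), h₁⟩
  · exact ⟨_, hc₂, h₂⟩
  · exact ⟨_, div_ne_zero (hη 3 2 (by decide)) (hζ 3 2 (by decide)), h₃⟩

theorem exists_linearEquiv_of_ratios_eq_of_eq_add {u u' : Fin 4 → Fin 3 → ℝ}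
    {η η' : Fin 4 → Dual ℝ (Fin 3 → ℝ)} (h : IsGenPosQuad u η) (h' : IsGenPosQuad u' η')
    (hu3 : u 3 = u 0 + u 1 + u 2) (hu3' : u' 3 = u' 0 + u' 1 + u' 2)
    {L L' : Fin 4 → Fin 4 → Dual ℝ (Fin 3 → ℝ)} (hL : IsLineFamily L u) (hL' : IsLineFamily L' u')
    (ht012 : tripleRatio (u 0) (u 1) (u 2) (η 0) (η 1) (η 2) =
      tripleRatio (u' 0) (u' 1) (u' 2) (η' 0) (η' 1) (η' 2))
    (ht023 : tripleRatio (u 0) (u 2) (u 3) (η 0) (η 2) (η 3) =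
      tripleRatio (u' 0) (u' 2) (u' 3) (η' 0) (η' 2) (η' 3))
    (he02 : tripleRatio (u 0) (u 3) (u 1) (η 0) (L 2 3) (L 1 2) =
      tripleRatio (u' 0) (u' 3) (u' 1) (η' 0) (L' 2 3) (L' 1 2))
    (he20 : tripleRatio (u 2) (u 1) (u 3) (η 2) (L 0 1) (L 0 3) =
      tripleRatio (u' 2) (u' 1) (u' 3) (η' 2) (L' 0 1) (L' 0 3)) :
    ∃ f : (Fin 3 → ℝ) ≃ₗ[ℝ] (Fin 3 → ℝ),
      ∀ i, f (u i) = u' i ∧ ∃ d : ℝ, d ≠ 0 ∧ η i = d • (η' i ∘ₗ f) := by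
  obtain ⟨-, -, hη₀, hu, -, hη⟩ := h
  obtain ⟨-, -, hη₀', hu', -, hη'⟩ := h'
  obtain ⟨f, hf⟩ := exists_linearEquiv_apply_eq_of_eq_add (by simp)
    (hu 0 1 2 (by decide) (by decide) (by decide))
    (hu' 0 1 2 (by decide) (by decide) (by decide)) hu3 hu3'
  refine ⟨f, fun i => ⟨hf i, eq_smul_of_ratios_eq (ζ := fun i => η' i ∘ₗ f) hu hu3 hη₀ hη
    (by simpa [hf] using hη₀') (by simpa [hf] using hη') hL (hL'.comp f hf) ?_ ?_ ?_ ?_ i⟩⟩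
  all_goals simpa only [tripleRatio_comp, LinearEquiv.coe_coe, hf]

theorem exists_linearEquiv_of_ratios_eq {v v' : Fin 4 → Fin 3 → ℝ}
    {η η' : Fin 4 → Dual ℝ (Fin 3 → ℝ)} (h : IsGenPosQuad v η) (h' : IsGenPosQuad v' η')
    {L L' : Fin 4 → Fin 4 → Dual ℝ (Fin 3 → ℝ)} (hL : IsLineFamily L v) (hL' : IsLineFamily L' v')
    (ht012 : tripleRatio (v 0) (v 1) (v 2) (η 0) (η 1) (η 2) =
      tripleRatio (v' 0) (v' 1) (v' 2) (η' 0) (η' 1) (η' 2))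
    (ht023 : tripleRatio (v 0) (v 2) (v 3) (η 0) (η 2) (η 3) =
      tripleRatio (v' 0) (v' 2) (v' 3) (η' 0) (η' 2) (η' 3))
    (he02 : tripleRatio (v 0) (v 3) (v 1) (η 0) (L 2 3) (L 1 2) =
      tripleRatio (v' 0) (v' 3) (v' 1) (η' 0) (L' 2 3) (L' 1 2))
    (he20 : tripleRatio (v 2) (v 1) (v 3) (η 2) (L 0 1) (L 0 3) =
      tripleRatio (v' 2) (v' 1) (v' 3) (η' 2) (L' 0 1) (L' 0 3)) :
    ∃ f : (Fin 3 → ℝ) ≃ₗ[ℝ] (Fin 3 → ℝ), ∀ i,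
      (∃ c : ℝ, c ≠ 0 ∧ f (v i) = c • v' i) ∧ ∃ d : ℝ, d ≠ 0 ∧ η i = d • (η' i ∘ₗ f) := by
  obtain ⟨b, hb, hbv⟩ := exists_smul_eq_sum_of_linearIndependent (by simp) h.2.2.2.1
  obtain ⟨b', hb', hbv'⟩ := exists_smul_eq_sum_of_linearIndependent (by simp) h'.2.2.2.1
  obtain ⟨f, hf⟩ := exists_linearEquiv_of_ratios_eq_of_eq_add (h.smul hb) (h'.smul hb')
    hbv hbv' (hL.smul b) (hL'.smul b')
    (by simpa [tripleRatio_smul_vectors, hb, hb'] using ht012)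
    (by simpa [tripleRatio_smul_vectors, hb, hb'] using ht023)
    (by simpa [tripleRatio_smul_vectors, hb, hb'] using he02)
    (by simpa [tripleRatio_smul_vectors, hb, hb'] using he20)
  refine ⟨f, fun i => ⟨⟨b' i / b i, div_ne_zero (hb' i) (hb i), ?_⟩, (hf i).2⟩⟩
  rw [div_eq_inv_mul, mul_smul, ← (hf i).1, map_smul, inv_smul_smul₀ (hb i)]

/-- Two triple ratios `t₀₁₂, t₀₂₃` and the two quadruple ratios `e₀₂, e₂₀` form a
complete invariant for ordered quadruples of flags in general position.  Here, for
`i ≠ j`, `L i j` (resp. `L' i j`) is a nonzero functional vanishing on `v i` and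
`v j` (resp. on `v' i`, `v' j`), representing the line through the two points, and
`e₀₂ = 𝕋((v₀,η₀),(v₃,ℓ₂₃),(v₁,ℓ₁₂))`, `e₂₀ = 𝕋((v₂,η₂),(v₁,ℓ₀₁),(v₃,ℓ₀₃))`. -/
theorem quadruple_of_flags_determined_by_ratios
    (v v' : Fin 4 → Fin 3 → ℝ) (η η' : Fin 4 → (Fin 3 → ℝ) →ₗ[ℝ] ℝ)
    (h : IsGenPosQuad v η) (h' : IsGenPosQuad v' η')
    (L L' : Fin 4 → Fin 4 → (Fin 3 → ℝ) →ₗ[ℝ] ℝ)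
    (hL : ∀ i j, i ≠ j → L i j ≠ 0 ∧ L i j (v i) = 0 ∧ L i j (v j) = 0)
    (hL' : ∀ i j, i ≠ j → L' i j ≠ 0 ∧ L' i j (v' i) = 0 ∧ L' i j (v' j) = 0)
    (ht012 : tripleRatio (v 0) (v 1) (v 2) (η 0) (η 1) (η 2) =
             tripleRatio (v' 0) (v' 1) (v' 2) (η' 0) (η' 1) (η' 2))
    (ht023 : tripleRatio (v 0) (v 2) (v 3) (η 0) (η 2) (η 3) =
             tripleRatio (v' 0) (v' 2) (v' 3) (η' 0) (η' 2) (η' 3))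
    (he02 : tripleRatio (v 0) (v 3) (v 1) (η 0) (L 2 3) (L 1 2) =
            tripleRatio (v' 0) (v' 3) (v' 1) (η' 0) (L' 2 3) (L' 1 2))
    (he20 : tripleRatio (v 2) (v 1) (v 3) (η 2) (L 0 1) (L 0 3) =
            tripleRatio (v' 2) (v' 1) (v' 3) (η' 2) (L' 0 1) (L' 0 3)) :
    ∃ T : Matrix.SpecialLinearGroup (Fin 3) ℝ, ∀ i,
      (∃ c : ℝ, c ≠ 0 ∧ T.1.mulVec (v i) = c • v' i) ∧
      (∃ d : ℝ, d ≠ 0 ∧ (η i).comp (T⁻¹).1.mulVecLin = d • η' i) := by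
  obtain ⟨f, hf⟩ := exists_linearEquiv_of_ratios_eq h h' hL hL' ht012 ht023 he02 he20
  exact exists_specialLinearGroup_of_linearEquiv (by decide) f (fun i => (hf i).1)
    (fun i => (hf i).2)
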